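/- arXiv:1307.4463 — 4 statements merged into one kernel-verified Lean document; each statement's English description precedes it below -/
import Mathlib

section
/- Lemma 4, part (1): the LT iterative-decoding error sequence is decreasing in the iteration number, i.e. for every l ≥ 0 one has 0 < p_l ≤ 1 and p_{l+1} ≤ p_l. -/
/-!
The update map `g y = exp (-(α δ (1 - y)))` sends `(0, 1]` into itself and is monotone there,
because `δ` has nonnegative coefficients. Starting from `p 0 = 1`, the first step can only go
down, `p 1 ≤ p 0`, and applying the monotone map `g` propagates this inequality along the
whole orbit.
-/

open Set

section OrbitOfMonotoneMap

variable {α : Type*} {g : α → α} {S : Set α} {u : ℕ → α}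

theorem mem_of_mapsTo_of_succ_eq (hS : MapsTo g S S) (hu : ∀ n, u (n + 1) = g (u n))
    (h0 : u 0 ∈ S) : ∀ n, u n ∈ S
  | 0 => h0
  | n + 1 => hu n ▸ hS (mem_of_mapsTo_of_succ_eq hS hu h0 n)

theorem antitone_of_monotoneOn_of_succ_eq [Preorder α] (hg : MonotoneOn g S) (hS : MapsTo g S S)
    (hu : ∀ n, u (n + 1) = g (u n)) (h0 : u 0 ∈ S) (h1 : u 1 ≤ u 0) : Antitone u := by
  have hmem := mem_of_mapsTo_of_succ_eq hS hu h0
  refine antitone_nat_of_succ_le fun n => ?_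
  induction n with
  | zero => exact h1
  | succ n ih =>
    calc u (n + 1 + 1) = g (u (n + 1)) := hu _
      _ ≤ g (u n) := hg (hmem (n + 1)) (hmem n) ih
      _ = u (n + 1) := (hu n).symm

end OrbitOfMonotoneMap

section NonnegCoefficients

variable {R ι : Type*} [Semiring R] [PartialOrder R] [IsOrderedRing R]
  (s : Finset ι) {c : ι → R} (e : ι → ℕ)

theorem sum_mul_pow_nonneg (hc : ∀ i ∈ s, 0 ≤ c i) {x : R} (hx : 0 ≤ x) :
    0 ≤ ∑ i ∈ s, c i * x ^ e i :=
  Finset.sum_nonneg fun i hi => mul_nonneg (hc i hi) (pow_nonneg hx _)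

theorem monotoneOn_sum_mul_pow (hc : ∀ i ∈ s, 0 ≤ c i) :
    MonotoneOn (fun x => ∑ i ∈ s, c i * x ^ e i) (Ici 0) :=
  fun _ hx _ _ hxy => Finset.sum_le_sum fun i hi =>
    mul_le_mul_of_nonneg_left (pow_le_pow_left₀ hx hxy _) (hc i hi)

end NonnegCoefficients

section ExpUpdate

variable {φ : ℝ → ℝ} {a : ℝ}

theorem mapsTo_exp_neg_mul_one_sub (hφ : ∀ x, 0 ≤ x → 0 ≤ φ x) (ha : 0 ≤ a) :
    MapsTo (fun y => Real.exp (-(a * φ (1 - y)))) (Iic 1) (Ioc 0 1) := fun _ hy =>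
  ⟨Real.exp_pos _, Real.exp_le_one_iff.mpr <|
    neg_nonpos.mpr <| mul_nonneg ha <| hφ _ <| sub_nonneg.mpr hy⟩

theorem monotoneOn_exp_neg_mul_one_sub (hφ : MonotoneOn φ (Ici 0)) (ha : 0 ≤ a) :
    MonotoneOn (fun y => Real.exp (-(a * φ (1 - y)))) (Iic 1) := by
  intro y hy y' hy' hyy'
  have hφyy' : φ (1 - y') ≤ φ (1 - y) :=
    hφ (mem_Ici.mpr (sub_nonneg.mpr hy')) (mem_Ici.mpr (sub_nonneg.mpr hy)) (by linarith)
  simpa using mul_le_mul_of_nonneg_left hφyy' ha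

end ExpUpdate

theorem lt_error_sequence_decreasing_in_iterations_general
    (K : ℕ) (N k : ℝ) (hN : 0 < N) (hk : 0 < k)
    (Δ : ℕ → ℝ) (hΔ : ∀ d ∈ Finset.Icc 1 K, 0 ≤ Δ d)
    (μ : ℝ) (hμpos : 0 < μ)
    (α : ℝ) (hα : α = (N / k) * μ)
    (δ : ℝ → ℝ)
    (hδ : ∀ x : ℝ, δ x = (1 / μ) * ∑ d ∈ Finset.Icc 1 K, (d : ℝ) * Δ d * x ^ (d - 1))
    (p : ℕ → ℝ) (hp0 : p 0 = 1)
    (hp : ∀ l : ℕ, p (l + 1) = Real.exp (-(α * δ (1 - p l)))) :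
    ∀ l : ℕ, 0 < p l ∧ p l ≤ 1 ∧ p (l + 1) ≤ p l := by
  have hα0 : 0 ≤ α := hα ▸ by positivity
  have hcoeff : ∀ d ∈ Finset.Icc 1 K, 0 ≤ (d : ℝ) * Δ d := fun d hd =>
    mul_nonneg d.cast_nonneg (hΔ d hd)
  have hδ_nonneg : ∀ x, 0 ≤ x → 0 ≤ δ x := fun x hx =>
    hδ x ▸ mul_nonneg (by positivity) (sum_mul_pow_nonneg _ _ hcoeff hx)
  have hδ_mono : MonotoneOn δ (Ici 0) := fun x hx y hy hxy => by
    rw [hδ, hδ]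
    exact mul_le_mul_of_nonneg_left (monotoneOn_sum_mul_pow _ _ hcoeff hx hy hxy) (by positivity)
  have hmaps : MapsTo (fun y => Real.exp (-(α * δ (1 - y)))) (Ioc 0 1) (Ioc 0 1) :=
    (mapsTo_exp_neg_mul_one_sub hδ_nonneg hα0).mono_left Ioc_subset_Iic_self
  have hmono : MonotoneOn (fun y => Real.exp (-(α * δ (1 - y)))) (Ioc 0 1) :=
    (monotoneOn_exp_neg_mul_one_sub hδ_mono hα0).mono Ioc_subset_Iic_self
  have hp0_mem : p 0 ∈ Ioc (0 : ℝ) 1 := by simp [hp0]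
  have hmem := mem_of_mapsTo_of_succ_eq hmaps hp hp0_mem
  have hanti := antitone_of_monotoneOn_of_succ_eq hmono hmaps hp hp0_mem ((hmem 1).2.trans hp0.ge)
  exact fun l => ⟨(hmem l).1, (hmem l).2, hanti l.le_succ⟩

/-- Lemma 4, part (1): the LT iterative-decoding error sequence
`p 0 = 1`, `p (l+1) = exp (-(α * δ (1 - p l)))` satisfies `0 < p l ≤ 1` and is
decreasing in the iteration number `l`. -/
theorem lt_error_sequence_decreasing_in_iterations
    (K : ℕ) (hK : 1 ≤ K) (N k : ℝ) (hN : 0 < N) (hk : 0 < k)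
    (Δ : ℕ → ℝ) (hΔ : ∀ d ∈ Finset.Icc 1 K, 0 ≤ Δ d)
    (μ : ℝ) (hμ : μ = ∑ d ∈ Finset.Icc 1 K, (d : ℝ) * Δ d) (hμpos : 0 < μ)
    (α : ℝ) (hα : α = (N / k) * μ)
    (δ : ℝ → ℝ)
    (hδ : ∀ x : ℝ, δ x = (1 / μ) * ∑ d ∈ Finset.Icc 1 K, (d : ℝ) * Δ d * x ^ (d - 1))
    (p : ℕ → ℝ) (hp0 : p 0 = 1)
    (hp : ∀ l : ℕ, p (l + 1) = Real.exp (-(α * δ (1 - p l)))) :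
    ∀ l : ℕ, 0 < p l ∧ p l ≤ 1 ∧ p (l + 1) ≤ p l :=
  lt_error_sequence_decreasing_in_iterations_general K N k hN hk Δ hΔ μ hμpos α hα δ hδ p hp0 hp
end

section
/- Comparison of the limits of the error recursion: if g, h : ℝ → ℝ are continuous and monotone nondecreasing on [0,1] with 0 ≤ g(x) ≤ h(x) for all x ∈ [0,1], and (p_l), (q_l) are defined by p_0 = q_0 = 1, p_l = exp(−g(1−p_{l−1})), q_l = exp(−h(1−q_{l−1})), then both sequences converge and lim_{l→∞} q_l ≤ lim_{l→∞} p_l; equivalently, the asymptotic recovery fraction 1 − lim p_l does not decrease when g is increased to h. -/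
/-!
For nondecreasing `g ≥ 0` the step `x ↦ exp (-g (1 - x))` maps `[0,1]` monotonically into itself,
so its iterates started at the top point `1` decrease and converge. If moreover
`g ≤ h`, then the step for `h` lies below the step for `g`, and monotonicity of the latter
propagates `q l ≤ p l` from `l = 0` to all `l`, hence to the limits.
-/

open Set Filter Topology Real

namespace ErrorRecursion

variable {g h : ℝ → ℝ} {p q : ℕ → ℝ}

theorem mem_Icc (hg0 : ∀ x ∈ Icc (0 : ℝ) 1, 0 ≤ g x) (hp0 : p 0 = 1)
    (hp : ∀ l, p (l + 1) = exp (-g (1 - p l))) (l : ℕ) : p l ∈ Icc (0 : ℝ) 1 := by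
  induction l with
  | zero => simp [hp0]
  | succ l ih =>
    rw [hp l]
    exact ⟨(exp_pos _).le, exp_le_one_iff.2 (neg_nonpos.2 (hg0 _ (Icc.one_sub_mem ih)))⟩

theorem antitone (hg0 : ∀ x ∈ Icc (0 : ℝ) 1, 0 ≤ g x) (hgmono : MonotoneOn g (Icc 0 1))
    (hp0 : p 0 = 1) (hp : ∀ l, p (l + 1) = exp (-g (1 - p l))) : Antitone p := by
  have hmem l := Icc.one_sub_mem (mem_Icc hg0 hp0 hp l)
  refine antitone_nat_of_succ_le fun l => ?_
  induction l with
  | zero => simpa [hp0] using (mem_Icc hg0 hp0 hp 1).2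
  | succ l ih =>
    rw [hp l, hp (l + 1)]
    gcongr
    exact hgmono (hmem l) (hmem (l + 1)) (by linarith)

theorem tendsto_iInf (hg0 : ∀ x ∈ Icc (0 : ℝ) 1, 0 ≤ g x) (hgmono : MonotoneOn g (Icc 0 1))
    (hp0 : p 0 = 1) (hp : ∀ l, p (l + 1) = exp (-g (1 - p l))) :
    Tendsto p atTop (𝓝 (⨅ l, p l)) :=
  tendsto_atTop_ciInf (antitone hg0 hgmono hp0 hp)
    ⟨0, forall_mem_range.2 fun l => (mem_Icc hg0 hp0 hp l).1⟩

theorem le_of_step_le (hgmono : MonotoneOn g (Icc 0 1)) (hgh : ∀ x ∈ Icc (0 : ℝ) 1, g x ≤ h x)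
    (hpmem : ∀ l, p l ∈ Icc (0 : ℝ) 1) (hqmem : ∀ l, q l ∈ Icc (0 : ℝ) 1) (h0 : q 0 ≤ p 0)
    (hp : ∀ l, p (l + 1) = exp (-g (1 - p l))) (hq : ∀ l, q (l + 1) = exp (-h (1 - q l)))
    (l : ℕ) : q l ≤ p l := by
  induction l with
  | zero => exact h0
  | succ l ih =>
    have hpl := Icc.one_sub_mem (hpmem l)
    have hql := Icc.one_sub_mem (hqmem l)
    rw [hp l, hq l]
    gcongr
    calc g (1 - p l) ≤ g (1 - q l) := hgmono hpl hql (by linarith)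
      _ ≤ h (1 - q l) := hgh _ hql

end ErrorRecursion

theorem lt_error_recursion_limit_comparison_general
    (g h : ℝ → ℝ)
    (hgmono : MonotoneOn g (Set.Icc (0 : ℝ) 1))
    (hhmono : MonotoneOn h (Set.Icc (0 : ℝ) 1))
    (hgh : ∀ x ∈ Set.Icc (0 : ℝ) 1, 0 ≤ g x ∧ g x ≤ h x)
    (p q : ℕ → ℝ) (hp0 : p 0 = 1) (hq0 : q 0 = 1)
    (hp : ∀ l : ℕ, p (l + 1) = Real.exp (-(g (1 - p l))))
    (hq : ∀ l : ℕ, q (l + 1) = Real.exp (-(h (1 - q l)))) :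
    ∃ P Q : ℝ, Filter.Tendsto p Filter.atTop (nhds P) ∧
      Filter.Tendsto q Filter.atTop (nhds Q) ∧ Q ≤ P := by
  have hg0 x hx : 0 ≤ g x := (hgh x hx).1
  have hh0 x hx : 0 ≤ h x := (hgh x hx).1.trans (hgh x hx).2
  have hp_lim := ErrorRecursion.tendsto_iInf hg0 hgmono hp0 hp
  have hq_lim := ErrorRecursion.tendsto_iInf hh0 hhmono hq0 hq
  have hqp : ∀ l, q l ≤ p l :=
    ErrorRecursion.le_of_step_le hgmono (fun x hx => (hgh x hx).2)
      (ErrorRecursion.mem_Icc hg0 hp0 hp) (ErrorRecursion.mem_Icc hh0 hq0 hq)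
      (hq0.trans hp0.symm).le hp hq
  exact ⟨_, _, hp_lim, hq_lim, le_of_tendsto_of_tendsto' hq_lim hp_lim hqp⟩

/-- Comparison of the limits of the AND-OR-tree error recursion: if `g ≤ h` are
continuous, nonnegative and nondecreasing on `[0,1]`, then both error
sequences converge and the limit for `h` is at most the limit for `g`. -/
theorem lt_error_recursion_limit_comparison
    (g h : ℝ → ℝ)
    (hgcont : ContinuousOn g (Set.Icc (0 : ℝ) 1))
    (hhcont : ContinuousOn h (Set.Icc (0 : ℝ) 1))
    (hgmono : MonotoneOn g (Set.Icc (0 : ℝ) 1))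
    (hhmono : MonotoneOn h (Set.Icc (0 : ℝ) 1))
    (hgh : ∀ x ∈ Set.Icc (0 : ℝ) 1, 0 ≤ g x ∧ g x ≤ h x)
    (p q : ℕ → ℝ) (hp0 : p 0 = 1) (hq0 : q 0 = 1)
    (hp : ∀ l : ℕ, p (l + 1) = Real.exp (-(g (1 - p l))))
    (hq : ∀ l : ℕ, q (l + 1) = Real.exp (-(h (1 - q l)))) :
    ∃ P Q : ℝ, Filter.Tendsto p Filter.atTop (nhds P) ∧
      Filter.Tendsto q Filter.atTop (nhds Q) ∧ Q ≤ P :=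
  lt_error_recursion_limit_comparison_general g h hgmono hhmono hgh p q hp0 hq0 hp hq
end

section
/- Lemma 4, part (2): the LT iterative-decoding error probability is decreasing in the number of time frames, i.e. for every iteration index l ≥ 0 one has p^{(i+1)}_l ≤ p^{(i)}_l, where for n ∈ {i, i+1} the sequence (p^{(n)}_l) is defined by p^{(n)}_0 := 1 and p^{(n)}_l := exp(−α^{(n)}·δ^{(n)}(1−p^{(n)}_{l−1})) for l ≥ 1. -/
/-!
Writing `Sₙ(d) = ∑_{j ≤ n} Ω⁽ʲ⁾_d` for the cumulative degree counts, the factors `n` and `μ⁽ⁿ⁾`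
cancel and `α⁽ⁿ⁾ δ⁽ⁿ⁾(x) = (N (1 - e) / k) ∑_d d Sₙ(d) x^(d-1)`. This polynomial has nonnegative
coefficients, so it is monotone in `x ≥ 0`, and its coefficients grow with `n`. Hence the
recursion for `n = i + 1` has the larger exponent, and an induction on `l` shows that its
iterates stay below those for `n = i`.
-/

open Finset

theorem iterate_exp_neg_le_of_le {p q : ℕ → ℝ} {f g : ℝ → ℝ} (hp0 : p 0 ≤ 1) (hqp0 : q 0 ≤ p 0)
    (hp : ∀ l, p (l + 1) = Real.exp (-f (1 - p l)))
    (hq : ∀ l, q (l + 1) = Real.exp (-g (1 - q l)))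
    (hf_nonneg : ∀ x, 0 ≤ x → 0 ≤ f x) (hf_mono : MonotoneOn f (Set.Ici 0))
    (hfg : ∀ x, 0 ≤ x → f x ≤ g x) :
    ∀ l, q l ≤ p l := by
  have hp_le_one : ∀ l, p l ≤ 1 := by
    intro l
    induction l with
    | zero => exact hp0
    | succ l ih =>
      rw [hp, Real.exp_le_one_iff, neg_nonpos]
      exact hf_nonneg _ (sub_nonneg.2 ih)
  intro l
  induction l with
  | zero => exact hqp0
  | succ l ih =>
    have hx : 0 ≤ 1 - p l := sub_nonneg.2 (hp_le_one l)
    have hxy : 1 - p l ≤ 1 - q l := by linarith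
    rw [hp, hq, Real.exp_le_exp, neg_le_neg_iff]
    calc f (1 - p l) ≤ f (1 - q l) := hf_mono hx (hx.trans hxy) hxy
      _ ≤ g (1 - q l) := hfg _ (hx.trans hxy)

theorem natCast_mul_one_div_mul_sum_Icc (n : ℕ) (f : ℕ → ℝ) :
    (n : ℝ) * (1 / n * ∑ j ∈ Icc 1 n, f j) = ∑ j ∈ Icc 1 n, f j := by
  rcases Nat.eq_zero_or_pos n with rfl | hn
  · simp
  · field_simp

/-- `n μ⁽ⁿ⁾ δ⁽ⁿ⁾(x)`, written with the cumulative counts `∑_{j ≤ n} Ω⁽ʲ⁾_d` in place of `Δ⁽ⁿ⁾_d`. -/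
noncomputable def cumulativeDegreePoly (Ω : ℕ → ℕ → ℝ) (K n : ℕ) (x : ℝ) : ℝ :=
  ∑ d ∈ Icc 1 K, (d : ℝ) * (∑ j ∈ Icc 1 n, Ω j d) * x ^ (d - 1)

theorem cumulativeDegreePoly_le_of_le {Ω : ℕ → ℕ → ℝ} {K n m : ℕ} {x y : ℝ} (hnm : n ≤ m)
    (hΩ : ∀ j ∈ Icc 1 m, ∀ d ∈ Icc 1 K, 0 ≤ Ω j d) (hx : 0 ≤ x) (hxy : x ≤ y) :
    cumulativeDegreePoly Ω K n x ≤ cumulativeDegreePoly Ω K m y := by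
  have hIcc : Icc 1 n ⊆ Icc 1 m := Icc_subset_Icc_right hnm
  refine sum_le_sum fun d hd => ?_
  have hS_nonneg : 0 ≤ ∑ j ∈ Icc 1 n, Ω j d :=
    sum_nonneg fun j hj => hΩ j (hIcc hj) d hd
  have hS_le : ∑ j ∈ Icc 1 n, Ω j d ≤ ∑ j ∈ Icc 1 m, Ω j d :=
    sum_le_sum_of_subset_of_nonneg hIcc fun j hj _ => hΩ j hj d hd
  gcongr
  exact mul_nonneg d.cast_nonneg (hS_nonneg.trans hS_le)

theorem cumulativeDegreePoly_nonneg {Ω : ℕ → ℕ → ℝ} {K n : ℕ} {x : ℝ}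
    (hΩ : ∀ j ∈ Icc 1 n, ∀ d ∈ Icc 1 K, 0 ≤ Ω j d) (hx : 0 ≤ x) :
    0 ≤ cumulativeDegreePoly Ω K n x := by
  simpa [cumulativeDegreePoly] using cumulativeDegreePoly_le_of_le (Nat.zero_le n) hΩ hx le_rfl

theorem natCast_mul_sum_mul_average_mul_pow (Ω : ℕ → ℕ → ℝ) (K n : ℕ) (x : ℝ) :
    (n : ℝ) * ∑ d ∈ Icc 1 K, (d : ℝ) * (1 / n * ∑ j ∈ Icc 1 n, Ω j d) * x ^ (d - 1) =
      cumulativeDegreePoly Ω K n x := by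
  rw [mul_sum]
  refine sum_congr rfl fun d _ => ?_
  calc (n : ℝ) * ((d : ℝ) * (1 / n * ∑ j ∈ Icc 1 n, Ω j d) * x ^ (d - 1))
      = d * (n * (1 / n * ∑ j ∈ Icc 1 n, Ω j d)) * x ^ (d - 1) := by ring
    _ = _ := by rw [natCast_mul_one_div_mul_sum_Icc]

theorem lt_error_sequence_decreasing_in_time_frames_general
    (K : ℕ) (i : ℕ) (N k e : ℝ) (hN : 0 < N) (hk : 0 < k)
    (he1 : e < 1)
    (Ω : ℕ → ℕ → ℝ)
    (hΩ : ∀ j ∈ Finset.Icc 1 (i + 1), ∀ d ∈ Finset.Icc 1 K, 0 ≤ Ω j d)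
    (Δ : ℕ → ℕ → ℝ)
    (hΔ : ∀ n ∈ ({i, i + 1} : Set ℕ), ∀ d : ℕ,
      Δ n d = (1 / (n : ℝ)) * ∑ j ∈ Finset.Icc 1 n, Ω j d)
    (N' : ℕ → ℝ) (hN' : ∀ n ∈ ({i, i + 1} : Set ℕ), N' n = (n : ℝ) * N * (1 - e))
    (μ : ℕ → ℝ)
    (hμpos : ∀ n ∈ ({i, i + 1} : Set ℕ), 0 < μ n)
    (α : ℕ → ℝ) (hα : ∀ n ∈ ({i, i + 1} : Set ℕ), α n = (N' n / k) * μ n)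
    (δ : ℕ → ℝ → ℝ)
    (hδ : ∀ n ∈ ({i, i + 1} : Set ℕ), ∀ x : ℝ,
      δ n x = (1 / μ n) * ∑ d ∈ Finset.Icc 1 K, (d : ℝ) * Δ n d * x ^ (d - 1))
    (p : ℕ → ℕ → ℝ)
    (hp0 : ∀ n ∈ ({i, i + 1} : Set ℕ), p n 0 = 1)
    (hp : ∀ n ∈ ({i, i + 1} : Set ℕ), ∀ l : ℕ,
      p n (l + 1) = Real.exp (-(α n * δ n (1 - p n l)))) :
    ∀ l : ℕ, p (i + 1) l ≤ p i l := by
  have hi : i ∈ ({i, i + 1} : Set ℕ) := Set.mem_insert _ _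
  have hi1 : i + 1 ∈ ({i, i + 1} : Set ℕ) := Set.mem_insert_of_mem _ rfl
  set C := N * (1 - e) / k
  have hC : 0 ≤ C := div_nonneg (mul_nonneg hN.le (by linarith)) hk.le
  have hexponent : ∀ n ∈ ({i, i + 1} : Set ℕ), ∀ x,
      α n * δ n x = C * cumulativeDegreePoly Ω K n x := by
    intro n hn x
    have hμ : μ n ≠ 0 := (hμpos n hn).ne'
    rw [hα n hn, hδ n hn, hN' n hn, ← natCast_mul_sum_mul_average_mul_pow]
    simp only [← hΔ n hn, C]
    field_simp
  have hΩi : ∀ j ∈ Icc 1 i, ∀ d ∈ Icc 1 K, 0 ≤ Ω j d :=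
    fun j hj => hΩ j (Icc_subset_Icc_right (Nat.le_succ i) hj)
  refine iterate_exp_neg_le_of_le (f := fun x => C * cumulativeDegreePoly Ω K i x)
    (g := fun x => C * cumulativeDegreePoly Ω K (i + 1) x)
    (hp0 i hi).le (by rw [hp0 i hi, hp0 (i + 1) hi1])
    (fun l => by rw [hp i hi, hexponent i hi])
    (fun l => by rw [hp (i + 1) hi1, hexponent (i + 1) hi1])
    (fun x hx => mul_nonneg hC (cumulativeDegreePoly_nonneg hΩi hx)) ?_ ?_
  · exact fun x hx y _ hxy =>
      mul_le_mul_of_nonneg_left (cumulativeDegreePoly_le_of_le le_rfl hΩi hx hxy) hC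
  · exact fun x hx =>
      mul_le_mul_of_nonneg_left (cumulativeDegreePoly_le_of_le (Nat.le_succ i) hΩ hx le_rfl) hC

/-- Lemma 4, part (2): the LT iterative-decoding error probability is
decreasing in the number of time frames, i.e. `p⁽ⁱ⁺¹⁾_l ≤ p⁽ⁱ⁾_l` for every
iteration index `l`. -/
theorem lt_error_sequence_decreasing_in_time_frames
    (K : ℕ) (hK : 1 ≤ K) (i : ℕ) (hi : 1 ≤ i) (N k e : ℝ) (hN : 0 < N) (hk : 0 < k)
    (he0 : 0 ≤ e) (he1 : e < 1)
    (Ω : ℕ → ℕ → ℝ)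
    (hΩ : ∀ j ∈ Finset.Icc 1 (i + 1), ∀ d ∈ Finset.Icc 1 K, 0 ≤ Ω j d)
    (Δ : ℕ → ℕ → ℝ)
    (hΔ : ∀ n ∈ ({i, i + 1} : Set ℕ), ∀ d : ℕ,
      Δ n d = (1 / (n : ℝ)) * ∑ j ∈ Finset.Icc 1 n, Ω j d)
    (N' : ℕ → ℝ) (hN' : ∀ n ∈ ({i, i + 1} : Set ℕ), N' n = (n : ℝ) * N * (1 - e))
    (μ : ℕ → ℝ)
    (hμ : ∀ n ∈ ({i, i + 1} : Set ℕ), μ n = ∑ d ∈ Finset.Icc 1 K, (d : ℝ) * Δ n d)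
    (hμpos : ∀ n ∈ ({i, i + 1} : Set ℕ), 0 < μ n)
    (α : ℕ → ℝ) (hα : ∀ n ∈ ({i, i + 1} : Set ℕ), α n = (N' n / k) * μ n)
    (δ : ℕ → ℝ → ℝ)
    (hδ : ∀ n ∈ ({i, i + 1} : Set ℕ), ∀ x : ℝ,
      δ n x = (1 / μ n) * ∑ d ∈ Finset.Icc 1 K, (d : ℝ) * Δ n d * x ^ (d - 1))
    (p : ℕ → ℕ → ℝ)
    (hp0 : ∀ n ∈ ({i, i + 1} : Set ℕ), p n 0 = 1)
    (hp : ∀ n ∈ ({i, i + 1} : Set ℕ), ∀ l : ℕ,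
      p n (l + 1) = Real.exp (-(α n * δ n (1 - p n l)))) :
    ∀ l : ℕ, p (i + 1) l ≤ p i l :=
  lt_error_sequence_decreasing_in_time_frames_general K i N k e hN hk he1 Ω hΩ Δ hΔ N' hN' μ hμpos α
    hα δ hδ p hp0 hp
end

section
/- Arithmetic core of the FCC throughput upper bound of Lemma 6 (case e₁ ≤ e ≤ e₂): let 0 ≤ e₁ ≤ e ≤ e₂ ≤ 1 with e < 1, let N, k > 0 be reals, and let N₂, T be reals satisfying N₂ ≥ k/(N(1−e)) and T ≥ N₂ + (k − N₂·N(1−e₂))/(N(2−e₁−e₂)). Then T > 0 and k/(N·T) ≤ (1−e)(2−e₁−e₂)/(2−e₁−e). -/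
/-! Clearing denominators, the bound on `T` says that the destination receives
`T·N·(2-e₁-e₂) ≥ k + N₂·N·(1-e₁)` coded symbols, while the bound on `N₂` gives
`N₂·N·(1-e) ≥ k`. Eliminating `N₂` yields `T·N·(1-e)(2-e₁-e₂) ≥ k·(2-e₁-e)`, which is
both the positivity of `T` and the throughput bound. -/

namespace FCC

variable {e₁ e₂ e N k N₂ T : ℝ}

lemma k_le_mul_of_ge_div (hNe : 0 < N * (1 - e)) (hN₂ : N₂ ≥ k / (N * (1 - e))) :
    k ≤ N₂ * N * (1 - e) := by
  rw [mul_assoc]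
  exact (div_le_iff₀ hNe).mp hN₂

lemma k_add_le_mul_of_frames_ge (hNe : 0 < N * (2 - e₁ - e₂))
    (hT : T ≥ N₂ + (k - N₂ * N * (1 - e₂)) / (N * (2 - e₁ - e₂))) :
    k + N₂ * N * (1 - e₁) ≤ T * N * (2 - e₁ - e₂) := by
  linear_combination (div_le_iff₀ hNe).mp (le_sub_iff_add_le'.mpr hT)

lemma k_mul_le_of_frames_ge (he₁ : e₁ ≤ 1) (he : e < 1)
    (hN₂ : k ≤ N₂ * N * (1 - e)) (hT : k + N₂ * N * (1 - e₁) ≤ T * N * (2 - e₁ - e₂)) :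
    k * (2 - e₁ - e) ≤ (1 - e) * (2 - e₁ - e₂) * (N * T) := by
  linear_combination mul_le_mul_of_nonneg_right hN₂ (sub_nonneg.mpr he₁) +
    mul_le_mul_of_nonneg_right hT (sub_nonneg.mpr he.le)

end FCC

open FCC in
theorem fcc_throughput_bound_middle_case_general
    (e₁ e₂ e N k N₂ T : ℝ)
    (h₁e : e₁ ≤ e) (he₂1 : e₂ ≤ 1) (he1 : e < 1)
    (hN : 0 < N) (hk : 0 < k)
    (hN₂ : N₂ ≥ k / (N * (1 - e)))
    (hT : T ≥ N₂ + (k - N₂ * N * (1 - e₂)) / (N * (2 - e₁ - e₂))) :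
    0 < T ∧ k / (N * T) ≤ (1 - e) * (2 - e₁ - e₂) / (2 - e₁ - e) := by
  have hA : 0 < 1 - e := by linarith
  have hB : 0 < 2 - e₁ - e₂ := by linarith
  have hC : 0 < 2 - e₁ - e := by linarith
  have hkey : k * (2 - e₁ - e) ≤ (1 - e) * (2 - e₁ - e₂) * (N * T) :=
    k_mul_le_of_frames_ge (by linarith) he1
      (k_le_mul_of_ge_div (by positivity) hN₂)
      (k_add_le_mul_of_frames_ge (by positivity) hT)
  have hNT : 0 < N * T :=
    pos_of_mul_pos_right ((mul_pos hk hC).trans_le hkey) (mul_pos hA hB).le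
  refine ⟨pos_of_mul_pos_right hNT hN.le, ?_⟩
  rwa [div_le_div_iff₀ hNT hC]

/-- Arithmetic core of the FCC throughput upper bound of Lemma 6 in the case
`e₁ ≤ e ≤ e₂`: the total number of time frames `T` is positive and the
throughput `k/(N·T)` is at most `(1-e)(2-e₁-e₂)/(2-e₁-e)`. -/
theorem fcc_throughput_bound_middle_case
    (e₁ e₂ e N k N₂ T : ℝ)
    (he₁0 : 0 ≤ e₁) (h₁e : e₁ ≤ e) (hee₂ : e ≤ e₂) (he₂1 : e₂ ≤ 1) (he1 : e < 1)
    (hN : 0 < N) (hk : 0 < k)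
    (hN₂ : N₂ ≥ k / (N * (1 - e)))
    (hT : T ≥ N₂ + (k - N₂ * N * (1 - e₂)) / (N * (2 - e₁ - e₂))) :
    0 < T ∧ k / (N * T) ≤ (1 - e) * (2 - e₁ - e₂) / (2 - e₁ - e) :=
  fcc_throughput_bound_middle_case_general e₁ e₂ e N k N₂ T h₁e he₂1 he1 hN hk hN₂ hT
end
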